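/- arXiv:2305.05637 — 4 statements merged into one kernel-verified Lean document; each statement's English description precedes it below -/
import Mathlib

section
/- Let A be an n×n symmetric matrix of signed pairs (A_ij = A_ji for all i, j). Then xᵀAx ⪰ 𝟘 holds for every vector x of signed pairs if and only if A_ii ⪰ 𝟘 for all i and A_ij ⊙ A_ij ⪯ A_ii ⊙ A_jj for all i ≠ j. (Characterization of signed tropical positive semidefinite matrices.) -/
/-- The tropical (max-plus) semiring 𝕋 = ℝ ∪ {−∞}, modeled as `WithBot ℝ`.
Tropical addition is `max`, tropical multiplication is `+`, zero is `⊥ = −∞`. -/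
abbrev Trop : Type := WithBot ℝ

/-- A pair (a⁺, a⁻) ∈ 𝕋² is signed if a⁺ = −∞ or a⁻ = −∞. -/
def SignedPair (a : Trop × Trop) : Prop := a.1 = ⊥ ∨ a.2 = ⊥

/-- The order relation ⪯ on pairs: (a⁺,a⁻) ⪯ (b⁺,b⁻) iff max(a⁺,b⁻) ≤ max(a⁻,b⁺). -/
def ple (a b : Trop × Trop) : Prop := max a.1 b.2 ≤ max a.2 b.1

/-- The strict relation ≺ on pairs: (a⁺,a⁻) ≺ (b⁺,b⁻) iff max(a⁺,b⁻) < max(a⁻,b⁺). -/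
def plt (a b : Trop × Trop) : Prop := max a.1 b.2 < max a.2 b.1

/-- Addition ⊕ of pairs in the symmetrized tropical semiring: componentwise max. -/
noncomputable def padd (a b : Trop × Trop) : Trop × Trop := (max a.1 b.1, max a.2 b.2)

/-- Multiplication ⊙ of pairs in the symmetrized tropical semiring. -/
noncomputable def pmul (a b : Trop × Trop) : Trop × Trop :=
  (max (a.1 + b.1) (a.2 + b.2), max (a.1 + b.2) (a.2 + b.1))

/-- The zero pair 𝟘 = (−∞, −∞). -/
def pzero : Trop × Trop := (⊥, ⊥)

/-- The quadratic form xᵀAx = ⊕_{i,j} x_i ⊙ A_{ij} ⊙ x_j, computed with the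
pair operations: its two components are the maxima of the corresponding
components of the terms x_i ⊙ A_{ij} ⊙ x_j. -/
noncomputable def quadForm {n : ℕ} (A : Fin n → Fin n → Trop × Trop)
    (x : Fin n → Trop × Trop) : Trop × Trop :=
  (Finset.univ.sup fun p : Fin n × Fin n => (pmul (pmul (x p.1) (A p.1 p.2)) (x p.2)).1,
   Finset.univ.sup fun p : Fin n × Fin n => (pmul (pmul (x p.1) (A p.1 p.2)) (x p.2)).2)

/-!
Write `|a| = max a⁺ a⁻` and `dᵢ = (A i i)⁺`. For a signed vector `x`, every term `xᵢ Aᵢⱼ xⱼ` has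
modulus at most `|xᵢ| + |Aᵢⱼ| + |xⱼ|`, while the diagonal term `xᵢ Aᵢᵢ xᵢ` has positive part
`|xᵢ| + dᵢ + |xᵢ|`. The condition `|Aᵢⱼ|² ≤ dᵢ dⱼ` is a tropical AM–GM inequality that makes each
term dominated by a diagonal one, so the negative part never wins.

Conversely, the diagonal conditions come from unit vectors. For `i ≠ j`, put `xᵢ = 0` and let `xⱼ`
have modulus `t` and the sign opposite to that of `Aᵢⱼ`: then `xᵀAx ⪰ 𝟘` reads
`|Aᵢⱼ| + t ≤ max dᵢ (2t + dⱼ)`, and letting `t` range over `ℝ` gives `2|Aᵢⱼ| ≤ dᵢ + dⱼ`.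
-/

lemma Finset.sup_subset {α β : Type*} [SemilatticeSup α] [OrderBot α] {s₁ s₂ : Finset β}
    {f : β → α} (h : s₁ ⊆ s₂) (hf : ∀ b ∈ s₂, b ∉ s₁ → f b = ⊥) : s₁.sup f = s₂.sup f := by
  refine le_antisymm (sup_mono h) (Finset.sup_le fun b hb => ?_)
  by_cases hb₁ : b ∈ s₁
  · exact le_sup hb₁
  · simp [hf b hb hb₁]

section WithBot

variable {α : Type*} [AddCommMonoid α] [LinearOrder α] [IsOrderedCancelAddMonoid α]

lemma WithBot.le_max_of_add_self_le {c d e : WithBot α} (h : c + c ≤ d + e) : c ≤ max d e := by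
  by_contra! hlt
  obtain ⟨hd, he⟩ := max_lt_iff.1 hlt
  lift c to α using ne_bot_of_gt hd
  induction d using WithBot.recBotCoe <;> induction e using WithBot.recBotCoe <;>
    simp_all [← WithBot.coe_add]
  exact (add_lt_add hd he).not_ge h

lemma WithBot.add_add_le_max_of_add_self_le {a b c d e : WithBot α} (h : c + c ≤ d + e) :
    a + c + b ≤ max (a + d + a) (b + e + b) := by
  refine WithBot.le_max_of_add_self_le ?_
  calc a + c + b + (a + c + b) = (c + c) + (a + a + (b + b)) := by abel
    _ ≤ (d + e) + (a + a + (b + b)) := by gcongr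
    _ = a + d + a + (b + e + b) := by abel

variable {K : Type*} [Field K] [LinearOrder K] [IsStrictOrderedRing K]

lemma WithBot.exists_lt_add_of_add_lt_add_self {p q s : WithBot K} (h : p + q < s + s) :
    ∃ t : K, p < s + t ∧ t + q < s := by
  lift s to K using fun hs => by simp [hs] at h
  induction p using WithBot.recBotCoe with
  | bot => induction q using WithBot.recBotCoe with
    | bot => exact ⟨0, by simp, by simp⟩
    | coe q => exact ⟨s - q - 1, by simp, by norm_cast; linarith⟩
  | coe p => induction q using WithBot.recBotCoe with
    | bot => exact ⟨p - s + 1, by norm_cast; linarith, by simp⟩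
    | coe q => refine ⟨(p - q) / 2, ?_, ?_⟩ <;> norm_cast at h ⊢ <;> linarith

lemma WithBot.add_self_le_add_of_forall_le_max {s p q : WithBot K}
    (H : ∀ t : K, s + t ≤ max p (t + q + t)) : s + s ≤ p + q := by
  by_contra! hlt
  obtain ⟨t, hpt, htq⟩ := WithBot.exists_lt_add_of_add_lt_add_self hlt
  exact (H t).not_gt (max_lt hpt (WithBot.add_lt_add_right WithBot.coe_ne_bot htq))

end WithBot

noncomputable def pabs (a : Trop × Trop) : Trop := max a.1 a.2

def pone : Trop × Trop := (0, ⊥)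

lemma pmul_comm (a b : Trop × Trop) : pmul a b = pmul b a := by
  simp only [pmul, add_comm, max_comm]

@[simp] lemma pmul_pone (a : Trop × Trop) : pmul a pone = a := by
  simp [pmul, pone]

@[simp] lemma pone_pmul (a : Trop × Trop) : pmul pone a = a := by
  simp [pmul, pone]

@[simp] lemma pmul_pzero (a : Trop × Trop) : pmul a pzero = pzero := by
  simp [pmul, pzero]

@[simp] lemma pzero_pmul (a : Trop × Trop) : pmul pzero a = pzero := by
  simp [pmul, pzero]

lemma pabs_pmul_le (a b : Trop × Trop) : pabs (pmul a b) ≤ pabs a + pabs b := by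
  simp only [pabs, pmul, max_le_iff]
  refine ⟨⟨?_, ?_⟩, ?_, ?_⟩ <;> gcongr <;> simp

lemma ple_pzero_iff {a : Trop × Trop} : ple pzero a ↔ a.2 ≤ a.1 := by
  simp [ple, pzero]

lemma SignedPair.ple_pzero_iff {a : Trop × Trop} (ha : SignedPair a) :
    ple pzero a ↔ a.2 = ⊥ := by
  rw [_root_.ple_pzero_iff]
  rcases ha with h | h <;> simp [h]

lemma SignedPair.pmul_self {a : Trop × Trop} (ha : SignedPair a) :
    pmul a a = (pabs a + pabs a, ⊥) := by
  rcases ha with h | h <;> simp [pmul, pabs, h]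

lemma SignedPair.pmul_pmul_self {w : Trop × Trop} (hw : SignedPair w) (a : Trop × Trop) :
    pmul (pmul w a) w = (pabs w + a.1 + pabs w, pabs w + a.2 + pabs w) := by
  rcases hw with h | h <;> simp [pmul, pabs, h, add_comm]

lemma SignedPair.exists_pmul_eq {c : Trop × Trop} (hc : SignedPair c) (t : ℝ) :
    ∃ w, SignedPair w ∧ pabs w = t ∧ pmul c w = (⊥, pabs c + t) := by
  rcases hc with h | h
  · exact ⟨(t, ⊥), Or.inr rfl, by simp [pabs], by simp [pmul, pabs, h]⟩
  · exact ⟨(⊥, t), Or.inl rfl, by simp [pabs], by simp [pmul, pabs, h]⟩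

lemma ple_pmul_self_iff {a b c : Trop × Trop} (hc : SignedPair c) (ha : a.2 = ⊥)
    (hb : b.2 = ⊥) : ple (pmul c c) (pmul a b) ↔ pabs c + pabs c ≤ a.1 + b.1 := by
  rw [hc.pmul_self]
  simp [ple, pmul, ha, hb]

section QuadForm

variable {n : ℕ} (A : Fin n → Fin n → Trop × Trop)

noncomputable def quadTerm (x : Fin n → Trop × Trop) (i j : Fin n) : Trop × Trop :=
  pmul (pmul (x i) (A i j)) (x j)

lemma quadForm_eq_sup_quadTerm (x : Fin n → Trop × Trop) :
    quadForm A x = (Finset.univ.sup fun p : Fin n × Fin n => (quadTerm A x p.1 p.2).1,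
      Finset.univ.sup fun p : Fin n × Fin n => (quadTerm A x p.1 p.2).2) :=
  rfl

lemma quadForm_eq_of_support_pair {x : Fin n → Trop × Trop} {i j : Fin n}
    (hx : ∀ k, k ≠ i → k ≠ j → x k = pzero) :
    quadForm A x = padd (padd (quadTerm A x i i) (quadTerm A x i j))
      (padd (quadTerm A x j i) (quadTerm A x j j)) := by
  have hvanish : ∀ p ∈ Finset.univ, p ∉ ({i, j} ×ˢ {i, j} : Finset (Fin n × Fin n)) →
      quadTerm A x p.1 p.2 = pzero := by
    rintro ⟨k, l⟩ - hkl
    simp only [Finset.mem_product, Finset.mem_insert, Finset.mem_singleton, not_and_or,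
      not_or] at hkl
    rcases hkl with ⟨hki, hkj⟩ | ⟨hli, hlj⟩
    · simp [quadTerm, hx k hki hkj]
    · simp [quadTerm, hx l hli hlj]
  rw [quadForm_eq_sup_quadTerm,
    ← Finset.sup_subset (Finset.subset_univ _) fun p hp hp' => congrArg Prod.fst (hvanish p hp hp'),
    ← Finset.sup_subset (Finset.subset_univ _) fun p hp hp' => congrArg Prod.snd (hvanish p hp hp')]
  simp [Finset.sup_product_left, padd, quadTerm, max_assoc]

lemma ple_pzero_quadForm
    (hA : ∀ i j, pabs (A i j) + pabs (A i j) ≤ (A i i).1 + (A j j).1)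
    {x : Fin n → Trop × Trop} (hx : ∀ i, SignedPair (x i)) : ple pzero (quadForm A x) := by
  have hdiag : ∀ k, pabs (x k) + (A k k).1 + pabs (x k) ≤ (quadForm A x).1 := fun k =>
    calc pabs (x k) + (A k k).1 + pabs (x k) = (quadTerm A x k k).1 := by
          rw [quadTerm, (hx k).pmul_pmul_self]
      _ ≤ (quadForm A x).1 := Finset.le_sup (f := fun p => (quadTerm A x p.1 p.2).1)
          (Finset.mem_univ (k, k))
  rw [ple_pzero_iff, quadForm_eq_sup_quadTerm]
  refine Finset.sup_le fun ⟨i, j⟩ _ => ?_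
  calc (quadTerm A x i j).2 ≤ pabs (quadTerm A x i j) := le_max_right _ _
    _ ≤ pabs (x i) + pabs (A i j) + pabs (x j) :=
      (pabs_pmul_le _ _).trans (add_le_add_left (pabs_pmul_le _ _) _)
    _ ≤ max (pabs (x i) + (A i i).1 + pabs (x i)) (pabs (x j) + (A j j).1 + pabs (x j)) :=
      WithBot.add_add_le_max_of_add_self_le (hA i j)
    _ ≤ (quadForm A x).1 := max_le (hdiag i) (hdiag j)

def IsTropPSD : Prop :=
  ∀ x : Fin n → Trop × Trop, (∀ i, SignedPair (x i)) → ple pzero (quadForm A x)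

variable {A}

lemma IsTropPSD.ple_pzero_diag (hA : IsTropPSD A) (i : Fin n) : ple pzero (A i i) := by
  have hq := hA (fun k => if k = i then pone else pzero) fun k => by
    by_cases hk : k = i <;> simp [hk, SignedPair, pone, pzero]
  rw [quadForm_eq_of_support_pair A (i := i) (j := i) fun k hk _ => if_neg hk] at hq
  simpa [quadTerm, padd] using hq

lemma IsTropPSD.add_self_pabs_le (hA : IsTropPSD A) {i j : Fin n} (hij : i ≠ j)
    (hc : SignedPair (A i j)) (hsym : A j i = A i j) :
    pabs (A i j) + pabs (A i j) ≤ (A i i).1 + (A j j).1 := by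
  refine WithBot.add_self_le_add_of_forall_le_max fun t => ?_
  obtain ⟨w, hw, hwt, hcw⟩ := hc.exists_pmul_eq t
  set x : Fin n → Trop × Trop := fun k => if k = i then pone else if k = j then w else pzero
  have hxi : x i = pone := if_pos rfl
  have hxj : x j = w := by simp [x, hij.symm]
  have hq := hA x fun k => by
    by_cases hki : k = i
    · simp [x, hki, SignedPair, pone]
    · by_cases hkj : k = j
      · subst hkj
        simpa [x, hki] using hw
      · simp [x, hki, hkj, SignedPair, pzero]
  rw [ple_pzero_iff,
    quadForm_eq_of_support_pair A (i := i) (j := j) fun k hki hkj => by simp [x, hki, hkj]] at hq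
  simp only [quadTerm, hxi, hxj, pone_pmul, pmul_pone, hsym, pmul_comm w (A i j), hcw,
    hw.pmul_pmul_self, hwt, padd] at hq
  simpa using (le_max_right _ _).trans ((le_max_left _ _).trans hq)

end QuadForm

/-- Characterization of signed tropical positive semidefinite matrices:
a symmetric matrix A of signed pairs satisfies xᵀAx ⪰ 𝟘 for all signed vectors x
iff A_ii ⪰ 𝟘 for all i and A_ij² ⪯ A_ii ⊙ A_jj for all i ≠ j. -/
theorem tropical_psd_characterization {n : ℕ} (A : Fin n → Fin n → Trop × Trop)
    (hsigned : ∀ i j, SignedPair (A i j)) (hsym : ∀ i j, A i j = A j i) :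
    (∀ x : Fin n → Trop × Trop, (∀ i, SignedPair (x i)) → ple pzero (quadForm A x)) ↔
      ((∀ i, ple pzero (A i i)) ∧
        ∀ i j, i ≠ j → ple (pmul (A i j) (A i j)) (pmul (A i i) (A j j))) := by
  have hdiag_iff : ∀ i, ple pzero (A i i) ↔ (A i i).2 = ⊥ := fun i => (hsigned i i).ple_pzero_iff
  constructor
  · intro (hA : IsTropPSD A)
    have hd i : (A i i).2 = ⊥ := (hdiag_iff i).1 (hA.ple_pzero_diag i)
    refine ⟨hA.ple_pzero_diag, fun i j hij => ?_⟩
    rw [ple_pmul_self_iff (hsigned i j) (hd i) (hd j)]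
    exact hA.add_self_pabs_le hij (hsigned i j) (hsym j i)
  · rintro ⟨hdiag, hoff⟩ x hx
    have hd i : (A i i).2 = ⊥ := (hdiag_iff i).1 (hdiag i)
    refine ple_pzero_quadForm A (fun i j => ?_) hx
    rcases eq_or_ne i j with rfl | hij
    · simp [pabs, hd i]
    · exact (ple_pmul_self_iff (hsigned i j) (hd i) (hd j)).1 (hoff i j hij)
end

section
/- Let Y, Z ∈ 𝕋^{n×n} be tropical positive semidefinite matrices. Then the tropical Frobenius scalar products satisfy ⟨Y, Z⟩ = ⟨diag(Y), diag(Z)⟩, i.e., max_{i,j} (Y_ij + Z_ij) = max_i (Y_ii + Z_ii). -/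
/-- A matrix Y ∈ 𝕋^{k×k} is tropical positive semidefinite if it is symmetric and
2·Y_lm ≤ Y_ll + Y_mm for all l, m. -/
def TropPSD {k : ℕ} (Y : Fin k → Fin k → Trop) : Prop :=
  (∀ l m, Y l m = Y m l) ∧ ∀ l m, Y l m + Y l m ≤ Y l l + Y m m

/-! The entrywise tropical product `Y ⊙ Z` is again tropical positive semidefinite, and in such a
matrix `2·Y_lm ≤ Y_ll + Y_mm` forces `Y_lm ≤ max (Y_ll, Y_mm)`: every off-diagonal entry is
dominated by a diagonal one, so the maximum over all entries is attained on the diagonal. -/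

/-- Doubling is strictly monotone on `WithBot α` even though adding `⊥` is not, since `c < a`
forces `a ≠ ⊥`. -/
theorem WithBot.le_max_of_add_self_le_add {α : Type*} [LinearOrder α] [Add α]
    [AddLeftMono α] [AddRightStrictMono α] {a b c : WithBot α} (h : a + a ≤ b + c) :
    a ≤ max b c := by
  by_contra! hlt
  obtain ⟨hb, hc⟩ := max_lt_iff.mp hlt
  have hbc : b + c < a + a := by
    rcases eq_or_ne c ⊥ with rfl | hc_ne
    · simpa using (WithBot.add_ne_bot.mpr ⟨hb.ne_bot, hb.ne_bot⟩).bot_lt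
    · exact WithBot.add_lt_add_of_lt_of_le hc_ne hb hc.le
  exact hbc.not_ge h

namespace TropPSD

variable {k : ℕ} {Y Z : Fin k → Fin k → Trop}

theorem le_max_diag (hY : TropPSD Y) (l m : Fin k) : Y l m ≤ max (Y l l) (Y m m) :=
  WithBot.le_max_of_add_self_le_add (hY.2 l m)

/-- The entrywise sum is the tropical Hadamard product. -/
theorem add (hY : TropPSD Y) (hZ : TropPSD Z) : TropPSD (Y + Z) := by
  refine ⟨fun l m => by simp only [Pi.add_apply, hY.1 l m, hZ.1 l m], fun l m => ?_⟩
  simp only [Pi.add_apply]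
  calc Y l m + Z l m + (Y l m + Z l m) = (Y l m + Y l m) + (Z l m + Z l m) := by abel
    _ ≤ (Y l l + Y m m) + (Z l l + Z m m) := add_le_add (hY.2 l m) (hZ.2 l m)
    _ = Y l l + Z l l + (Y m m + Z m m) := by abel

theorem sup_eq_sup_diag (hY : TropPSD Y) :
    (Finset.univ.sup fun p : Fin k × Fin k => Y p.1 p.2) = Finset.univ.sup fun i => Y i i := by
  apply le_antisymm
  · refine Finset.sup_le fun p _ => (hY.le_max_diag p.1 p.2).trans (max_le ?_ ?_) <;>
      exact Finset.le_sup (f := fun i => Y i i) (Finset.mem_univ _)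
  · exact Finset.sup_le fun i _ =>
      Finset.le_sup (f := fun p : Fin k × Fin k => Y p.1 p.2) (Finset.mem_univ (i, i))

end TropPSD

/-- For tropical positive semidefinite matrices Y, Z, the tropical Frobenius scalar
product satisfies ⟨Y,Z⟩ = ⟨diag Y, diag Z⟩: max_{i,j} (Y_ij + Z_ij) = max_i (Y_ii + Z_ii). -/
theorem tropPSD_frobenius_diag {n : ℕ} (Y Z : Fin n → Fin n → Trop)
    (hY : TropPSD Y) (hZ : TropPSD Z) :
    (Finset.univ.sup fun p : Fin n × Fin n => Y p.1 p.2 + Z p.1 p.2) =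
      Finset.univ.sup fun i => Y i i + Z i i := by
  exact (hY.add hZ).sup_eq_sup_diag
end

section
/- For all n, k ≥ 1 and every X ∈ 𝕋^{n×n}: X is tropical completely positive semidefinite of order k if and only if X is tropical completely positive of order k. -/
/-- X ∈ 𝕋^{n×n} is tropical completely positive of order k if X_ij = ⟨y^i, y^j⟩
for some vectors y¹, …, yⁿ ∈ 𝕋ᵏ. -/
def TropCP (n k : ℕ) (X : Fin n → Fin n → Trop) : Prop :=
  ∃ y : Fin n → Fin k → Trop,
    ∀ i j, X i j = Finset.univ.sup fun l => y i l + y j l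

/-- X ∈ 𝕋^{n×n} is tropical completely positive semidefinite of order k if
X_ij = ⟨Y^i, Y^j⟩ (tropical Frobenius product) for some tropical positive
semidefinite matrices Y¹, …, Yⁿ ∈ 𝕋^{k×k}. -/
def TropCPSD (n k : ℕ) (X : Fin n → Fin n → Trop) : Prop :=
  ∃ Y : Fin n → Fin k → Fin k → Trop, (∀ i, TropPSD (Y i)) ∧
    ∀ i j, X i j = Finset.univ.sup fun p : Fin k × Fin k => Y i p.1 p.2 + Y j p.1 p.2

/-!
For tropical positive semidefinite `Y` and `Z`, adding `2 Y_lm ≤ Y_ll + Y_mm` to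
`2 Z_lm ≤ Z_ll + Z_mm` bounds every off-diagonal term `Y_lm + Z_lm` of the tropical Frobenius
product by a diagonal one, so `⟨Y, Z⟩` only depends on the diagonals. Hence taking diagonals turns
a TropCPSD factorization into a TropCP one, and conversely the vectors `y^i` of a TropCP
factorization, put on the diagonal with `−∞` elsewhere, form a TropCPSD factorization.
-/

open Finset

theorem WithBot.le_of_add_self_le_add_self {α : Type*} [AddCommMonoid α] [LinearOrder α]
    [IsOrderedCancelAddMonoid α] {a b : WithBot α} (h : a + a ≤ b + b) : a ≤ b :=
  le_of_not_gt fun hba =>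
    ((add_le_add_left hba.le b).trans_lt (WithBot.add_lt_add_left hba.ne_bot hba)).not_ge h

namespace TropPSD

variable {k : ℕ} {Y Z : Fin k → Fin k → Trop}

theorem add_le_max_diag (hY : TropPSD Y) (hZ : TropPSD Z) (l m : Fin k) :
    Y l m + Z l m ≤ max (Y l l + Z l l) (Y m m + Z m m) := by
  refine WithBot.le_of_add_self_le_add_self ?_
  calc (Y l m + Z l m) + (Y l m + Z l m)
      = (Y l m + Y l m) + (Z l m + Z l m) := add_add_add_comm ..
    _ ≤ (Y l l + Y m m) + (Z l l + Z m m) := add_le_add (hY.2 l m) (hZ.2 l m)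
    _ = (Y l l + Z l l) + (Y m m + Z m m) := add_add_add_comm ..
    _ ≤ _ := add_le_add (le_max_left _ _) (le_max_right _ _)

theorem sup_add_eq_sup_diag (hY : TropPSD Y) (hZ : TropPSD Z) :
    (univ.sup fun p : Fin k × Fin k => Y p.1 p.2 + Z p.1 p.2) =
      univ.sup fun l => Y l l + Z l l :=
  le_antisymm
    (Finset.sup_le fun p _ => (hY.add_le_max_diag hZ p.1 p.2).trans
      (max_le (le_sup (f := fun l => Y l l + Z l l) (mem_univ _))
        (le_sup (f := fun l => Y l l + Z l l) (mem_univ _))))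
    (Finset.sup_le fun l _ =>
      le_sup (f := fun p : Fin k × Fin k => Y p.1 p.2 + Z p.1 p.2) (mem_univ (l, l)))

end TropPSD

def tropDiagonal {ι : Type*} [DecidableEq ι] (v : ι → Trop) : ι → ι → Trop :=
  fun l m => if l = m then v l else ⊥

theorem tropPSD_tropDiagonal {k : ℕ} (v : Fin k → Trop) : TropPSD (tropDiagonal v) := by
  refine ⟨fun l m => ?_, fun l m => ?_⟩ <;> by_cases h : l = m <;>
    simp [tropDiagonal, h, eq_comm]

theorem tropCPSD_iff_tropCP_general {n k : ℕ}
    (X : Fin n → Fin n → Trop) : TropCPSD n k X ↔ TropCP n k X := by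
  constructor
  · rintro ⟨Y, hY, hX⟩
    exact ⟨fun i l => Y i l l, fun i j => (hX i j).trans ((hY i).sup_add_eq_sup_diag (hY j))⟩
  · rintro ⟨y, hX⟩
    refine ⟨fun i => tropDiagonal (y i), fun i => tropPSD_tropDiagonal (y i), fun i j => ?_⟩
    rw [hX, (tropPSD_tropDiagonal _).sup_add_eq_sup_diag (tropPSD_tropDiagonal _)]
    simp [tropDiagonal]

/-- For all n, k ≥ 1, a matrix X ∈ 𝕋^{n×n} is tropical completely positive
semidefinite of order k iff it is tropical completely positive of order k. -/
theorem tropCPSD_iff_tropCP {n k : ℕ} (hn : 1 ≤ n) (hk : 1 ≤ k)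
    (X : Fin n → Fin n → Trop) : TropCPSD n k X ↔ TropCP n k X :=
  tropCPSD_iff_tropCP_general X
end

section
/- Let A be an n×n symmetric matrix of signed pairs (A_ij = A_ji for all i, j). Then A is tropical copositive, i.e., xᵀAx ⪰ 𝟘 holds for every vector x whose entries are nonnegative signed pairs of the form (x_i, −∞) with x_i ∈ 𝕋, if and only if A_ii ⪰ 𝟘 for all i and (A_ij⁻, −∞) ⊙ (A_ij⁻, −∞) ⪯ A_ii ⊙ A_jj for all i, j, where A_ij⁻ denotes the second (negative) component of the pair A_ij. (Characterization of the tropical copositive cone, the signed polar of the tropical completely positive cone.) -/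
open Finset

section TropArith

lemma le_of_add_self_le_add_self {a b : Trop} (h : a + a ≤ b + b) : a ≤ b := by
  induction a using WithBot.recBotCoe with
  | bot => exact bot_le
  | coe r =>
    induction b using WithBot.recBotCoe with
    | bot => simp [← WithBot.coe_add] at h
    | coe s =>
      have : r + r ≤ s + s := by exact_mod_cast h
      exact_mod_cast (by linarith : r ≤ s)

lemma add_le_max_of_add_self_le {a b c : Trop} (h : c + c ≤ a + b) (t s : Trop) :
    t + c + s ≤ max (t + a + t) (s + b + s) := by
  refine le_of_add_self_le_add_self ?_
  calc (t + c + s) + (t + c + s) = (t + t) + (c + c) + (s + s) := by abel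
    _ ≤ (t + t) + (a + b) + (s + s) := by gcongr
    _ = (t + a + t) + (s + b + s) := by abel
    _ ≤ _ := add_le_add (le_max_left _ _) (le_max_right _ _)

-- `t = (b - a) / 2` balances the two sides; if `a` or `b` is `⊥`, an extreme `t` contradicts `h`.
lemma add_self_le_add_of_forall_le_max {a b c : Trop}
    (h : ∀ t : ℝ, (t : Trop) + c ≤ max (t + a + t) b) : c + c ≤ a + b := by
  induction c using WithBot.recBotCoe with
  | bot => simp
  | coe γ =>
    induction a using WithBot.recBotCoe with
    | bot =>
      induction b using WithBot.recBotCoe with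
      | bot => simpa [← WithBot.coe_add] using h 0
      | coe β =>
        have := h (β - γ + 1)
        simp only [WithBot.add_bot, WithBot.bot_add, bot_le, max_eq_right] at this
        norm_cast at this
        linarith
    | coe α =>
      induction b using WithBot.recBotCoe with
      | bot =>
        have := h (γ - α - 1)
        simp only [max_bot_right] at this
        norm_cast at this
        linarith
      | coe β =>
        have := h ((β - α) / 2)
        norm_cast at this ⊢
        rw [show (β - α) / 2 + α + (β - α) / 2 = β by ring, max_self] at this
        linarith

end TropArith

section TropQuad

variable {ι : Type*} [Fintype ι]

noncomputable def tropQuad (M : ι → ι → Trop) (x : ι → Trop) : Trop :=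
  univ.sup fun p : ι × ι => x p.1 + M p.1 p.2 + x p.2

variable {M : ι → ι → Trop} {x : ι → Trop}

lemma le_tropQuad (i j : ι) : x i + M i j + x j ≤ tropQuad M x :=
  le_sup (f := fun p : ι × ι => x p.1 + M p.1 p.2 + x p.2) (mem_univ (i, j))

lemma tropQuad_le_iff {y : Trop} : tropQuad M x ≤ y ↔ ∀ i j, x i + M i j + x j ≤ y := by
  simp [tropQuad, Prod.forall]

lemma tropQuad_le_of_forall_ne_bot {y : Trop}
    (h : ∀ i j, x i ≠ ⊥ → x j ≠ ⊥ → x i + M i j + x j ≤ y) : tropQuad M x ≤ y := by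
  refine tropQuad_le_iff.2 fun i j => ?_
  by_cases hi : x i = ⊥
  · simp [hi]
  by_cases hj : x j = ⊥
  · simp [hj]
  exact h i j hi hj

variable {N P : ι → ι → Trop}

lemma le_of_forall_tropQuad_le (h : ∀ x, tropQuad N x ≤ tropQuad P x) (i : ι) :
    N i i ≤ P i i := by
  classical
  let x : ι → Trop := Function.update ⊥ i 0
  calc N i i = x i + N i i + x i := by simp [x]
    _ ≤ tropQuad N x := le_tropQuad i i
    _ ≤ tropQuad P x := h x
    _ ≤ P i i := tropQuad_le_of_forall_ne_bot fun k l hk hl => by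
        obtain rfl : k = i := by simpa [x, Function.update_apply] using hk
        obtain rfl : l = k := by simpa [x, Function.update_apply] using hl
        simp [x]

lemma add_self_le_add_of_forall_tropQuad_le (h : ∀ x, tropQuad N x ≤ tropQuad P x) {i j : ι}
    (hij : i ≠ j) (hPij : P i j = ⊥) (hPji : P j i = ⊥) : N i j + N i j ≤ P i i + P j j := by
  classical
  refine add_self_le_add_of_forall_le_max fun t => ?_
  let x : ι → Trop := Function.update (Function.update ⊥ j 0) i t
  have hxi : x i = t := by simp [x]
  have hxj : x j = 0 := by simp [x, hij.symm]
  calc (t : Trop) + N i j = x i + N i j + x j := by simp [hxi, hxj]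
    _ ≤ tropQuad N x := le_tropQuad i j
    _ ≤ tropQuad P x := h x
    _ ≤ _ := tropQuad_le_of_forall_ne_bot fun k l hk hl => by
        have hsupp : ∀ m, x m ≠ ⊥ → m = i ∨ m = j := fun m hm => by
          by_contra! hne
          simp [x, hne.1, hne.2] at hm
        rcases hsupp k hk with rfl | rfl <;> rcases hsupp l hl with rfl | rfl
        · simp [hxi]
        · simp [hPij]
        · simp [hPji]
        · simp [hxj]

theorem forall_tropQuad_le_iff (hsigned : ∀ i j, P i j = ⊥ ∨ N i j = ⊥)
    (hsym : ∀ i j, P i j = P j i) :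
    (∀ x, tropQuad N x ≤ tropQuad P x) ↔ ∀ i j, N i j + N i j ≤ P i i + P j j := by
  constructor
  · intro h i j
    rcases eq_or_ne i j with rfl | hij
    · exact add_le_add (le_of_forall_tropQuad_le h i) (le_of_forall_tropQuad_le h i)
    rcases hsigned i j with hP | hN
    · exact add_self_le_add_of_forall_tropQuad_le h hij hP (hsym i j ▸ hP)
    · simp [hN]
  · intro h x
    refine tropQuad_le_iff.2 fun i j => ?_
    exact (add_le_max_of_add_self_le (h i j) (x i) (x j)).trans
      (max_le (le_tropQuad i i) (le_tropQuad j j))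

end TropQuad

lemma pzero_ple_iff (a : Trop × Trop) : ple pzero a ↔ a.2 ≤ a.1 := by
  simp [ple, pzero]

lemma pmul_pmul_eq_add (t s : Trop) (a : Trop × Trop) :
    pmul (pmul (t, ⊥) a) (s, ⊥) = (t + a.1 + s, t + a.2 + s) := by
  simp [pmul]

lemma quadForm_eq_tropQuad {n : ℕ} (A : Fin n → Fin n → Trop × Trop) (x : Fin n → Trop) :
    quadForm A (fun i => (x i, ⊥)) =
      (tropQuad (fun i j => (A i j).1) x, tropQuad (fun i j => (A i j).2) x) := by
  simp only [quadForm, tropQuad, pmul_pmul_eq_add]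

lemma pmul_sq_ple_pmul_iff {a b : Trop × Trop} (ha : a.2 ≤ a.1) (hb : b.2 ≤ b.1) (c : Trop) :
    ple (pmul (c, ⊥) (c, ⊥)) (pmul a b) ↔ c + c ≤ a.1 + b.1 := by
  have hdom : max (a.1 + b.2) (a.2 + b.1) ≤ a.1 + b.1 :=
    max_le (add_le_add_right hb _) (add_le_add_left ha _)
  have hpos : max (a.1 + b.1) (a.2 + b.2) = a.1 + b.1 := max_eq_left (add_le_add ha hb)
  simp [ple, pmul, hpos, hdom]

/-- Characterization of the tropical copositive cone (the signed polar of the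
tropical completely positive cone): a symmetric matrix A of signed pairs satisfies
xᵀAx ⪰ 𝟘 for all vectors x with nonnegative entries (x_i, −∞) iff A_ii ⪰ 𝟘 for all
i and (A_ij⁻)² ⪯ A_ii ⊙ A_jj for all i, j. -/
theorem tropical_copositive_characterization {n : ℕ} (A : Fin n → Fin n → Trop × Trop)
    (hsigned : ∀ i j, SignedPair (A i j)) (hsym : ∀ i j, A i j = A j i) :
    (∀ x : Fin n → Trop, ple pzero (quadForm A fun i => (x i, ⊥))) ↔
      ((∀ i, ple pzero (A i i)) ∧
        ∀ i j, ple (pmul ((A i j).2, ⊥) ((A i j).2, ⊥)) (pmul (A i i) (A j j))) := by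
  simp only [quadForm_eq_tropQuad, pzero_ple_iff]
  rw [forall_tropQuad_le_iff hsigned fun i j => congrArg Prod.fst (hsym i j)]
  constructor
  · intro h
    have hdiag : ∀ i, (A i i).2 ≤ (A i i).1 := fun i => le_of_add_self_le_add_self (h i i)
    exact ⟨hdiag, fun i j => (pmul_sq_ple_pmul_iff (hdiag i) (hdiag j) _).2 (h i j)⟩
  · rintro ⟨hdiag, h⟩ i j
    exact (pmul_sq_ple_pmul_iff (hdiag i) (hdiag j) _).1 (h i j)
end
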